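/- arXiv:1712.00814 — 3 statements merged into one kernel-verified Lean document; each statement's English description precedes it below -/
import Mathlib

section
/- Let G be a group acting acylindrically by isometries on a hyperbolic geodesic metric space S. Then every element of G is either elliptic or loxodromic with respect to this action. -/
section MetricDefs

/-- A geodesic parametrization from `x` to `y`: an isometric embedding of
`[0, dist x y]` sending the endpoints to `x` and `y`. -/
def IsGeodesicParam {S : Type*} [MetricSpace S] (γ : ℝ → S) (x y : S) : Prop :=
  γ 0 = x ∧ γ (dist x y) = y ∧
    ∀ s ∈ Set.Icc (0 : ℝ) (dist x y), ∀ t ∈ Set.Icc (0 : ℝ) (dist x y),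
      dist (γ s) (γ t) = |s - t|

/-- A geodesic metric space: every two points are joined by a geodesic. -/
def GeodesicSpace (S : Type*) [MetricSpace S] : Prop :=
  ∀ x y : S, ∃ γ : ℝ → S, IsGeodesicParam γ x y

/-- The image of a geodesic side. -/
def geodSide {S : Type*} [MetricSpace S] (γ : ℝ → S) (x y : S) : Set S :=
  γ '' Set.Icc (0 : ℝ) (dist x y)

/-- `A` is contained in the union of the `δ`-neighborhoods of `B` and `C`. -/
def SideThin {S : Type*} [MetricSpace S] (δ : ℝ) (A B C : Set S) : Prop :=
  ∀ p ∈ A, ∃ q ∈ B ∪ C, dist p q ≤ δ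

/-- A hyperbolic space: a geodesic metric space in which, for some `δ ≥ 0`,
every side of every geodesic triangle is contained in the union of the
`δ`-neighborhoods of the other two sides. -/
def HyperbolicSpace (S : Type*) [MetricSpace S] : Prop :=
  GeodesicSpace S ∧
    ∃ δ : ℝ, 0 ≤ δ ∧
      ∀ (x y z : S) (γ₁ γ₂ γ₃ : ℝ → S),
        IsGeodesicParam γ₁ x y → IsGeodesicParam γ₂ y z → IsGeodesicParam γ₃ x z →
          SideThin δ (geodSide γ₁ x y) (geodSide γ₂ y z) (geodSide γ₃ x z) ∧
          SideThin δ (geodSide γ₂ y z) (geodSide γ₁ x y) (geodSide γ₃ x z) ∧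
          SideThin δ (geodSide γ₃ x z) (geodSide γ₁ x y) (geodSide γ₂ y z)

variable (G : Type*) [Group G] (S : Type*) [MetricSpace S] [MulAction G S]

/-- The action of `G` on `S` is by isometries. -/
def IsIsometricAction : Prop := ∀ (g : G) (x y : S), dist (g • x) (g • y) = dist x y

/-- The action of `G` on `S` is acylindrical: for every `ε > 0` there are `R, N > 0`
such that for all `x y` with `dist x y ≥ R` there are at most `N` elements `g` moving
both `x` and `y` by at most `ε`. -/
def AcylindricalAction : Prop :=
  ∀ ε : ℝ, 0 < ε → ∃ (R : ℝ) (N : ℕ), 0 < R ∧ 0 < N ∧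
    ∀ x y : S, R ≤ dist x y →
      {g : G | dist x (g • x) ≤ ε ∧ dist y (g • y) ≤ ε}.encard ≤ (N : ℕ∞)

/-- Some `G`-orbit in `S` is unbounded. -/
def UnboundedOrbits : Prop :=
  ∃ s : S, ¬ Bornology.IsBounded (Set.range fun g : G => g • s)

variable {G}

/-- `g` is loxodromic: orbit maps of `⟨g⟩` are quasi-isometric embeddings of `ℤ`. -/
def IsLoxodromic (g : G) : Prop :=
  ∀ s : S, ∃ c : ℝ, 0 < c ∧ ∀ n : ℤ, c * |(n : ℝ)| ≤ dist s (g ^ n • s)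

/-- `g` is elliptic: all orbits of `⟨g⟩` are bounded. -/
def IsElliptic (g : G) : Prop :=
  ∀ s : S, Bornology.IsBounded (Set.range fun n : ℤ => g ^ n • s)

/-- `g` satisfies the weak proper discontinuity (WPD) condition. -/
def IsWPD (g : G) : Prop :=
  ∀ ε : ℝ, 0 < ε → ∀ s : S, ∃ M : ℕ,
    {a : G | dist s (a • s) < ε ∧ dist (g ^ M • s) (a • g ^ M • s) < ε}.Finite

end MetricDefs

/-- A group is virtually cyclic if it contains a cyclic subgroup of finite index. -/
def VirtuallyCyclic (G : Type*) [Group G] : Prop :=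
  ∃ H : Subgroup G, IsCyclic H ∧ H.FiniteIndex

/-- A group is acylindrically hyperbolic if it is not virtually cyclic and admits an
acylindrical isometric action with unbounded orbits on a hyperbolic geodesic metric space. -/
def AcylindricallyHyperbolic (G : Type*) [Group G] : Prop :=
  ¬ VirtuallyCyclic G ∧
    ∃ (S : Type) (_ : MetricSpace S) (_ : MulAction G S),
      IsIsometricAction G S ∧ HyperbolicSpace S ∧ AcylindricalAction G S ∧ UnboundedOrbits G S

/-!
If for some `y` and `j` the orbit path `y, g^j y, g^{2j} y` does not backtrack, i.e.
`d(y, g^{2j} y) > d(y, g^j y) + 6δ`, the four-point condition propagates the small Gromov product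
at `g^j y` along the whole path `y, g^j y, g^{2j} y, …`, whose length then grows linearly; by
subadditivity of `n ↦ d(s, g^n s)` every orbit grows linearly and `g` is loxodromic.

Otherwise `g^j` acts on each geodesic `[y, g^j y]` roughly as the reflection in its midpoint. If
the orbit of `x` were unbounded, then for `d(x, g^m x)` large the midpoint of `[x, g^m x]` would be
moved at most `18δ` by each of `1, g, …, g^N`; taking two such midpoints far apart, these `N + 1`
distinct elements contradict acylindricity.
-/

open Set Metric Bornology

section GeodesicSpaces

variable {S : Type*} [MetricSpace S]

noncomputable def gromovProduct (p a b : S) : ℝ := (dist p a + dist p b - dist a b) / 2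

theorem gromovProduct_nonneg (p a b : S) : 0 ≤ gromovProduct p a b := by
  have := dist_triangle_left a b p
  unfold gromovProduct
  linarith

theorem gromovProduct_comm (p a b : S) : gromovProduct p a b = gromovProduct p b a := by
  rw [gromovProduct, gromovProduct, dist_comm a b, add_comm (dist p a)]

theorem gromovProduct_le_dist_left (p a b : S) : gromovProduct p a b ≤ dist p a := by
  have := dist_triangle p a b
  unfold gromovProduct
  linarith

theorem apply_mem_geodSide {γ : ℝ → S} {x y : S} {t : ℝ} (ht : t ∈ Icc 0 (dist x y)) :
    γ t ∈ geodSide γ x y :=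
  mem_image_of_mem γ ht

namespace IsGeodesicParam

variable {γ : ℝ → S} {x y : S}

theorem dist_left_apply (hγ : IsGeodesicParam γ x y) {t : ℝ} (ht : t ∈ Icc 0 (dist x y)) :
    dist x (γ t) = t := by
  have := hγ.2.2 0 ⟨le_rfl, dist_nonneg⟩ t ht
  rwa [hγ.1, zero_sub, abs_neg, abs_of_nonneg ht.1] at this

theorem dist_apply_right (hγ : IsGeodesicParam γ x y) {t : ℝ} (ht : t ∈ Icc 0 (dist x y)) :
    dist (γ t) y = dist x y - t := by
  have := hγ.2.2 t ht (dist x y) ⟨dist_nonneg, le_rfl⟩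
  rwa [hγ.2.1, abs_sub_comm, abs_of_nonneg (sub_nonneg.2 ht.2)] at this

theorem left_mem_geodSide (hγ : IsGeodesicParam γ x y) : x ∈ geodSide γ x y :=
  hγ.1 ▸ apply_mem_geodSide ⟨le_rfl, dist_nonneg⟩

theorem right_mem_geodSide (hγ : IsGeodesicParam γ x y) : y ∈ geodSide γ x y := by
  simpa only [hγ.2.1] using apply_mem_geodSide (γ := γ) ⟨dist_nonneg, le_refl (dist x y)⟩

theorem dist_add_dist_of_mem (hγ : IsGeodesicParam γ x y) {q : S} (hq : q ∈ geodSide γ x y) :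
    dist x q + dist q y = dist x y := by
  obtain ⟨t, ht, rfl⟩ := hq
  rw [hγ.dist_left_apply ht, hγ.dist_apply_right ht]
  ring

theorem dist_le_of_mem (hγ : IsGeodesicParam γ x y) {q : S} (hq : q ∈ geodSide γ x y) :
    dist x q ≤ dist x y ∧ dist q y ≤ dist x y := by
  have := hγ.dist_add_dist_of_mem hq
  constructor <;> linarith [dist_nonneg (x := x) (y := q), dist_nonneg (x := q) (y := y)]

theorem gromovProduct_le_dist_of_mem (hγ : IsGeodesicParam γ x y) (p : S) {q : S}
    (hq : q ∈ geodSide γ x y) : gromovProduct p x y ≤ dist p q := by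
  have := hγ.dist_add_dist_of_mem hq
  have := dist_triangle_right p x q
  have := dist_triangle p q y
  unfold gromovProduct
  linarith

theorem reverse (hγ : IsGeodesicParam γ x y) :
    IsGeodesicParam (fun t => γ (dist x y - t)) y x := by
  rw [IsGeodesicParam, dist_comm y x]
  refine ⟨by simpa using hγ.2.1, by simpa using hγ.1, fun s hs t ht => ?_⟩
  rw [hγ.2.2 _ ⟨by linarith [hs.2], by linarith [hs.1]⟩ _ ⟨by linarith [ht.2], by linarith [ht.1]⟩,
    abs_sub_comm]
  ring_nf

theorem continuousOn (hγ : IsGeodesicParam γ x y) : ContinuousOn γ (Icc 0 (dist x y)) := by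
  refine (LipschitzOnWith.of_dist_le_mul (K := 1) fun s hs t ht => ?_).continuousOn
  simp [hγ.2.2 s hs t ht, Real.dist_eq]

theorem isCompact_geodSide (hγ : IsGeodesicParam γ x y) : IsCompact (geodSide γ x y) :=
  isCompact_Icc.image_of_continuousOn hγ.continuousOn

end IsGeodesicParam

end GeodesicSpaces

section Hyperbolicity

/-- Only the third side of a triangle is required to be thin (the other two cases are relabellings),
and `δ > 0`, which is harmless as thinness is monotone in `δ`. -/
def DeltaHyperbolic (S : Type*) [MetricSpace S] (δ : ℝ) : Prop :=
  0 < δ ∧ GeodesicSpace S ∧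
    ∀ (x y z : S) (γ₁ γ₂ γ₃ : ℝ → S),
      IsGeodesicParam γ₁ x y → IsGeodesicParam γ₂ y z → IsGeodesicParam γ₃ x z →
        SideThin δ (geodSide γ₃ x z) (geodSide γ₁ x y) (geodSide γ₂ y z)

variable {S : Type*} [MetricSpace S] {δ : ℝ}

theorem HyperbolicSpace.exists_deltaHyperbolic (h : HyperbolicSpace S) :
    ∃ δ, DeltaHyperbolic S δ := by
  obtain ⟨hgeo, δ, hδ, hthin⟩ := h
  refine ⟨δ + 1, by linarith, hgeo, fun x y z γ₁ γ₂ γ₃ h₁ h₂ h₃ p hp => ?_⟩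
  obtain ⟨q, hq, hpq⟩ := (hthin x y z γ₁ γ₂ γ₃ h₁ h₂ h₃).2.2 p hp
  exact ⟨q, hq, by linarith⟩

namespace DeltaHyperbolic

theorem exists_mem_union_dist_le (hS : DeltaHyperbolic S δ) {x y z : S} {γ₁ γ₂ γ₃ : ℝ → S}
    (h₁ : IsGeodesicParam γ₁ x y) (h₂ : IsGeodesicParam γ₂ y z) (h₃ : IsGeodesicParam γ₃ x z)
    {p : S} (hp : p ∈ geodSide γ₃ x z) :
    ∃ q ∈ geodSide γ₁ x y ∪ geodSide γ₂ y z, dist p q ≤ δ :=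
  hS.2.2 x y z γ₁ γ₂ γ₃ h₁ h₂ h₃ p hp

theorem dist_apply_le_of_lt_gromovProduct (hS : DeltaHyperbolic S δ) {p a b : S}
    {γ₁ γ₂ : ℝ → S} (h₁ : IsGeodesicParam γ₁ p a) (h₂ : IsGeodesicParam γ₂ p b) {t : ℝ}
    (ht0 : 0 ≤ t) (ht : t + δ < gromovProduct p a b) :
    dist (γ₁ t) (γ₂ t) ≤ 2 * δ := by
  obtain ⟨β, hβ⟩ := hS.2.1 b a
  have hta : t ∈ Icc 0 (dist p a) := ⟨ht0, by linarith [gromovProduct_le_dist_left p a b, hS.1]⟩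
  have htb : t ∈ Icc 0 (dist p b) :=
    ⟨ht0, by linarith [gromovProduct_le_dist_left p b a, gromovProduct_comm p a b, hS.1]⟩
  obtain ⟨q, hq | hq, hpq⟩ := hS.exists_mem_union_dist_le h₂ hβ h₁ (apply_mem_geodSide hta)
  · obtain ⟨r, hr, rfl⟩ := hq
    have hrt : |r - t| ≤ δ := by
      have := abs_dist_sub_le (γ₂ r) (γ₁ t) p
      rw [dist_comm _ p, dist_comm _ p, h₁.dist_left_apply hta, h₂.dist_left_apply hr,
        dist_comm] at this
      linarith
    calc dist (γ₁ t) (γ₂ t) ≤ dist (γ₁ t) (γ₂ r) + dist (γ₂ r) (γ₂ t) := dist_triangle _ _ _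
      _ ≤ δ + δ := add_le_add hpq (by rw [h₂.2.2 r hr t htb]; exact hrt)
      _ = 2 * δ := by ring
  · exfalso
    have h := dist_triangle p (γ₁ t) q
    rw [h₁.dist_left_apply hta] at h
    linarith [hβ.gromovProduct_le_dist_of_mem p hq, gromovProduct_comm p a b]

theorem exists_mem_geodSide_infDist_le (hS : DeltaHyperbolic S δ) {p a b : S}
    {γ γ₁ γ₂ : ℝ → S} (hγ : IsGeodesicParam γ a b) (h₁ : IsGeodesicParam γ₁ a p)
    (h₂ : IsGeodesicParam γ₂ p b) :
    ∃ w ∈ geodSide γ a b, infDist w (geodSide γ₁ a p) ≤ δ ∧ infDist w (geodSide γ₂ p b) ≤ δ := by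
  set F : ℝ → ℝ := fun t => infDist (γ t) (geodSide γ₁ a p) - infDist (γ t) (geodSide γ₂ p b)
  have hF : ContinuousOn F (Icc 0 (dist a b)) :=
    ((continuous_infDist_pt _).comp_continuousOn hγ.continuousOn).sub
      ((continuous_infDist_pt _).comp_continuousOn hγ.continuousOn)
  have hF0 : F 0 ≤ 0 := by
    simp only [F, hγ.1, infDist_zero_of_mem h₁.left_mem_geodSide, zero_sub, neg_nonpos]
    exact infDist_nonneg
  have hF1 : 0 ≤ F (dist a b) := by
    simp only [F, hγ.2.1, infDist_zero_of_mem h₂.right_mem_geodSide, sub_zero]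
    exact infDist_nonneg
  obtain ⟨t, ht, hFt⟩ := intermediate_value_Icc dist_nonneg hF ⟨hF0, hF1⟩
  have heq := sub_eq_zero.1 hFt
  obtain ⟨q, hq | hq, hwq⟩ := hS.exists_mem_union_dist_le h₁ h₂ hγ (apply_mem_geodSide ht)
  · have := (infDist_le_dist_of_mem hq).trans hwq
    exact ⟨γ t, apply_mem_geodSide ht, this, by linarith⟩
  · have := (infDist_le_dist_of_mem hq).trans hwq
    exact ⟨γ t, apply_mem_geodSide ht, by linarith, this⟩

theorem exists_mem_geodSide_dist_le_gromovProduct_add (hS : DeltaHyperbolic S δ) (p : S)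
    {a b : S} {γ : ℝ → S} (hγ : IsGeodesicParam γ a b) :
    ∃ w ∈ geodSide γ a b, dist p w ≤ gromovProduct p a b + 2 * δ := by
  obtain ⟨γ₁, h₁⟩ := hS.2.1 a p
  obtain ⟨γ₂, h₂⟩ := hS.2.1 p b
  obtain ⟨w, hw, hw₁, hw₂⟩ := hS.exists_mem_geodSide_infDist_le hγ h₁ h₂
  obtain ⟨u, hu, hwu⟩ := h₁.isCompact_geodSide.exists_infDist_eq_dist ⟨a, h₁.left_mem_geodSide⟩ w
  obtain ⟨v, hv, hwv⟩ := h₂.isCompact_geodSide.exists_infDist_eq_dist ⟨p, h₂.left_mem_geodSide⟩ w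
  refine ⟨w, hw, ?_⟩
  have := hγ.dist_add_dist_of_mem hw
  have := h₁.dist_add_dist_of_mem hu
  have := h₂.dist_add_dist_of_mem hv
  unfold gromovProduct
  linarith [dist_triangle a u w, dist_triangle w v b, dist_triangle p u w, dist_triangle p v w,
    dist_comm u w, dist_comm v w, dist_comm p a, dist_comm p u]

theorem min_gromovProduct_le (hS : DeltaHyperbolic S δ) (p a b c : S) :
    min (gromovProduct p a c) (gromovProduct p c b) ≤ gromovProduct p a b + 3 * δ := by
  obtain ⟨γ, hγ⟩ := hS.2.1 a b
  obtain ⟨γ₁, h₁⟩ := hS.2.1 a c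
  obtain ⟨γ₂, h₂⟩ := hS.2.1 c b
  obtain ⟨w, hw, hpw⟩ := hS.exists_mem_geodSide_dist_le_gromovProduct_add p hγ
  obtain ⟨v, hv | hv, hwv⟩ := hS.exists_mem_union_dist_le h₁ h₂ hγ hw
  · exact (min_le_left _ _).trans
      (by linarith [h₁.gromovProduct_le_dist_of_mem p hv, dist_triangle p w v])
  · exact (min_le_right _ _).trans
      (by linarith [h₂.gromovProduct_le_dist_of_mem p hv, dist_triangle p w v])

theorem exists_mem_geodSide_dist_le_of_dist_le (hS : DeltaHyperbolic S δ) {a b a' b' : S}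
    {γ γ' : ℝ → S} (hγ : IsGeodesicParam γ a b) (hγ' : IsGeodesicParam γ' a' b') {p : S}
    (hp : p ∈ geodSide γ' a' b') (ha : dist a a' + 2 * δ < dist p a)
    (hb : dist b b' + 2 * δ < dist p b) : ∃ w ∈ geodSide γ a b, dist p w ≤ 2 * δ := by
  obtain ⟨α, hα⟩ := hS.2.1 a' a
  obtain ⟨β, hβ⟩ := hS.2.1 a b'
  obtain ⟨ε, hε⟩ := hS.2.1 b b'
  obtain ⟨q, hq | hq, hpq⟩ := hS.exists_mem_union_dist_le hα hβ hγ' hp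
  · exfalso
    linarith [(hα.dist_le_of_mem hq).2, dist_triangle p q a, dist_comm a a', hS.1]
  obtain ⟨w, hw | hw, hqw⟩ := hS.exists_mem_union_dist_le hγ hε hβ hq
  · exact ⟨w, hw, by linarith [dist_triangle p q w]⟩
  · exfalso
    linarith [(hε.dist_le_of_mem hw).1, dist_triangle4 p q w b, dist_comm w b]

end DeltaHyperbolic

end Hyperbolicity

theorem Subadditive.mul_le_mul_of_le_apply_mul {u : ℕ → ℝ} (hu : Subadditive u) {J : ℕ}
    {θ C : ℝ} (h : ∀ n : ℕ, n * θ - C ≤ u (J * n)) (m : ℕ) : m * θ ≤ J * u m := by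
  by_contra! hlt
  obtain ⟨k, hk⟩ := exists_nat_gt ((C + u 0) / (m * θ - J * u m))
  rw [div_lt_iff₀ (by linarith)] at hk
  have h1 := hu.apply_mul_add_le (k * J) m 0
  have h2 := h (k * m)
  rw [show J * (k * m) = k * J * m + 0 by ring] at h2
  push_cast at h1 h2
  nlinarith

section IsometricActions

variable {G : Type*} [Group G] {S : Type*} [MetricSpace S] [MulAction G S] {g : G}

theorem gromovProduct_smul (hiso : IsIsometricAction G S) (c : G) (p a b : S) :
    gromovProduct (c • p) (c • a) (c • b) = gromovProduct p a b := by
  rw [gromovProduct, gromovProduct, hiso, hiso, hiso]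

theorem IsGeodesicParam.smul (hiso : IsIsometricAction G S) (c : G) {γ : ℝ → S} {x y : S}
    (hγ : IsGeodesicParam γ x y) : IsGeodesicParam (fun t => c • γ t) (c • x) (c • y) := by
  rw [IsGeodesicParam, hiso]
  exact ⟨by rw [hγ.1], by rw [hγ.2.1], fun s hs t ht => by rw [hiso, hγ.2.2 s hs t ht]⟩

theorem dist_smul_le_dist_smul_add (hiso : IsIsometricAction G S) (a : G) (s y : S) :
    dist y (a • y) ≤ dist s (a • s) + 2 * dist s y := by
  have := dist_triangle4 y s (a • s) (a • y)
  rw [hiso, dist_comm y s] at this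
  linarith

theorem dist_zpow_smul_eq_natAbs (hiso : IsIsometricAction G S) (s : S) (n : ℤ) :
    dist s (g ^ n • s) = dist s (g ^ n.natAbs • s) := by
  obtain ⟨m, rfl | rfl⟩ := Int.eq_nat_or_neg n
  · simp
  · rw [Int.natAbs_neg, Int.natAbs_natCast, zpow_neg, zpow_natCast, ← hiso (g ^ m), smul_inv_smul,
      dist_comm]

theorem subadditive_dist_pow_smul (hiso : IsIsometricAction G S) (s : S) :
    Subadditive fun n => dist s (g ^ n • s) := by
  intro m n
  calc dist s (g ^ (m + n) • s) ≤ dist s (g ^ m • s) + dist (g ^ m • s) (g ^ (m + n) • s) :=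
        dist_triangle _ _ _
    _ = dist s (g ^ m • s) + dist s (g ^ n • s) := by rw [pow_add, mul_smul, hiso]

theorem exists_lt_dist_pow_smul (hiso : IsIsometricAction G S) {x : S}
    (hx : ¬IsBounded (range fun n : ℤ => g ^ n • x)) (r : ℝ) : ∃ n : ℕ, r < dist x (g ^ n • x) := by
  by_contra! h
  refine hx ((isBounded_closedBall (x := x) (r := r)).subset ?_)
  rintro _ ⟨n, rfl⟩
  rw [mem_closedBall, dist_comm, dist_zpow_smul_eq_natAbs hiso]
  exact h _

theorem injective_pow_of_not_isBounded {x : S} (hx : ¬IsBounded (range fun n : ℤ => g ^ n • x)) :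
    Function.Injective fun n : ℕ => g ^ n := by
  refine injective_pow_iff_not_isOfFinOrder.2 fun hfin => hx ?_
  have hfin : (range fun n : ℤ => g ^ n).Finite := by
    simpa [Subgroup.coe_zpowers] using hfin.finite_zpowers
  refine (hfin.image (· • x)).isBounded.subset ?_
  rintro _ ⟨n, rfl⟩
  exact ⟨g ^ n, ⟨n, rfl⟩, rfl⟩

theorem isLoxodromic_of_mul_le_dist_pow_smul (hiso : IsIsometricAction G S) {y : S} {J : ℕ}
    (hJ : 0 < J) {θ : ℝ} (hθ : 0 < θ) (h : ∀ n : ℕ, n * θ ≤ dist y (g ^ (J * n) • y)) :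
    IsLoxodromic S g := by
  intro s
  refine ⟨θ / J, by positivity, fun n => ?_⟩
  have hlin := (subadditive_dist_pow_smul hiso s).mul_le_mul_of_le_apply_mul (C := 2 * dist s y)
    (fun n => by linarith [h n, dist_smul_le_dist_smul_add hiso (g ^ (J * n)) s y]) n.natAbs
  rw [dist_zpow_smul_eq_natAbs hiso, ← Int.cast_abs, ← Nat.cast_natAbs,
    div_mul_eq_mul_div, div_le_iff₀ (by positivity)]
  linarith

end IsometricActions

section HyperbolicActions

variable {G : Type*} [Group G] {S : Type*} [MetricSpace S] [MulAction G S] {g : G} {δ : ℝ}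

theorem dist_pow_smul_pow_succ_smul (hiso : IsIsometricAction G S) (h : G) (y : S) (i : ℕ) :
    dist (h ^ i • y) (h ^ (i + 1) • y) = dist y (h • y) := by
  rw [pow_succ, mul_smul, hiso]

theorem dist_smul_smul_eq_sub_gromovProduct (hiso : IsIsometricAction G S) (h : G) (y : S) :
    dist y (h • h • y) = 2 * dist y (h • y) - 2 * gromovProduct (h • y) y (h • h • y) := by
  rw [gromovProduct, hiso, dist_comm (h • y) y]
  ring

/-- The four-point condition at `h^(i+1) y`, applied to `h^i y`, `h^(i+2) y` and `y`, passes the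
bound on the turn of the orbit path at `h^i y` on to its turn at `h^(i+1) y`. -/
theorem DeltaHyperbolic.gromovProduct_pow_smul_le (hS : DeltaHyperbolic S δ)
    (hiso : IsIsometricAction G S) {h : G} {y : S}
    (hgrow : dist y (h • y) + 6 * δ < dist y (h • h • y)) (i : ℕ) :
    gromovProduct (h ^ i • y) y (h ^ (i + 1) • y) ≤
      gromovProduct (h • y) y (h • h • y) + 3 * δ := by
  have hK := dist_smul_smul_eq_sub_gromovProduct hiso h y
  have hK0 := gromovProduct_nonneg (h • y) y (h • h • y)
  set K := gromovProduct (h • y) y (h • h • y)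
  induction i with
  | zero =>
    simp only [gromovProduct, pow_zero, one_smul, zero_add, pow_one, dist_self]
    linarith [hS.1]
  | succ i ih =>
    have h4 := hS.min_gromovProduct_le (h ^ (i + 1) • y) (h ^ i • y) (h ^ (i + 1 + 1) • y) y
    have hab : gromovProduct (h ^ (i + 1) • y) (h ^ i • y) (h ^ (i + 1 + 1) • y) = K := by
      simp only [pow_succ, mul_smul]
      exact gromovProduct_smul hiso _ _ _ _
    have hac : K + 3 * δ < gromovProduct (h ^ (i + 1) • y) (h ^ i • y) y := by
      unfold gromovProduct at ih ⊢
      linarith [dist_pow_smul_pow_succ_smul hiso h y i, dist_comm (h ^ (i + 1) • y) (h ^ i • y),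
        dist_comm (h ^ (i + 1) • y) y]
    rw [hab] at h4
    exact (min_le_iff.1 h4).resolve_left (by linarith)

theorem DeltaHyperbolic.mul_le_dist_pow_smul (hS : DeltaHyperbolic S δ)
    (hiso : IsIsometricAction G S) {h : G} {y : S}
    (hgrow : dist y (h • y) + 6 * δ < dist y (h • h • y)) (n : ℕ) :
    n * (dist y (h • h • y) - dist y (h • y) - 6 * δ) ≤ dist y (h ^ n • y) := by
  have hK := dist_smul_smul_eq_sub_gromovProduct hiso h y
  have hturn := hS.gromovProduct_pow_smul_le hiso hgrow
  set K := gromovProduct (h • y) y (h • h • y)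
  induction n with
  | zero => simp
  | succ n ih =>
    have := hturn n
    unfold gromovProduct at this
    rw [dist_pow_smul_pow_succ_smul hiso, dist_comm (h ^ n • y) y] at this
    push_cast
    linarith

/-- For `g` loxodromic this fails for large `j`: the path `y, g^j y, g^{2j} y` runs along an axis.
When it holds, `g^j` acts on `[y, g^j y]` roughly as the reflection in its midpoint. -/
def OrbitsBacktrack (S : Type*) [MetricSpace S] [MulAction G S] (g : G) (δ : ℝ) : Prop :=
  ∀ (y : S) (j : ℕ), dist y (g ^ j • g ^ j • y) ≤ dist y (g ^ j • y) + 6 * δ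

theorem isLoxodromic_of_not_orbitsBacktrack (hS : DeltaHyperbolic S δ)
    (hiso : IsIsometricAction G S) (hg : ¬OrbitsBacktrack S g δ) : IsLoxodromic S g := by
  obtain ⟨y, j, hj⟩ : ∃ (y : S) (j : ℕ),
      dist y (g ^ j • y) + 6 * δ < dist y (g ^ j • g ^ j • y) := by
    simpa [OrbitsBacktrack] using hg
  have hj0 : 0 < j := Nat.pos_of_ne_zero fun hj0 => by
    simp only [hj0, pow_zero, one_smul, dist_self] at hj
    linarith [hS.1]
  have hθ : 0 < dist y (g ^ j • g ^ j • y) - dist y (g ^ j • y) - 6 * δ := by linarith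
  refine isLoxodromic_of_mul_le_dist_pow_smul hiso (y := y) hj0 hθ fun n => ?_
  rw [pow_mul]
  exact hS.mul_le_dist_pow_smul hiso hj n

namespace OrbitsBacktrack

theorem le_gromovProduct (hg : OrbitsBacktrack S g δ) (hiso : IsIsometricAction G S) (y : S)
    (j : ℕ) : dist y (g ^ j • y) / 2 - 3 * δ ≤ gromovProduct (g ^ j • y) y (g ^ j • g ^ j • y) := by
  have := hg y j
  rw [gromovProduct, hiso, dist_comm (g ^ j • y) y]
  linarith

variable {y : S} {j : ℕ} {γ : ℝ → S}

theorem dist_apply_sub_le (hg : OrbitsBacktrack S g δ) (hS : DeltaHyperbolic S δ)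
    (hiso : IsIsometricAction G S) (hγ : IsGeodesicParam γ y (g ^ j • y)) {s : ℝ} (hs0 : 0 ≤ s)
    (hs : s + 4 * δ < dist y (g ^ j • y) / 2) :
    dist (γ (dist y (g ^ j • y) - s)) (g ^ j • γ s) ≤ 2 * δ :=
  hS.dist_apply_le_of_lt_gromovProduct hγ.reverse (hγ.smul hiso _) hs0
    (by linarith [hg.le_gromovProduct hiso y j])

theorem dist_smul_midpoint_le (hg : OrbitsBacktrack S g δ) (hS : DeltaHyperbolic S δ)
    (hiso : IsIsometricAction G S) (hγ : IsGeodesicParam γ y (g ^ j • y)) :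
    dist (γ (dist y (g ^ j • y) / 2)) (g ^ j • γ (dist y (g ^ j • y) / 2)) ≤ 20 * δ := by
  set L := dist y (g ^ j • y) with hL
  have hmid : L / 2 ∈ Icc 0 L := ⟨by positivity, half_le_self dist_nonneg⟩
  rcases lt_or_ge L (10 * δ) with hsmall | hlarge
  · linarith [dist_triangle4 (γ (L / 2)) y (g ^ j • y) (g ^ j • γ (L / 2)),
      hiso (g ^ j) y (γ (L / 2)), hγ.dist_left_apply hmid, dist_comm (γ (L / 2)) y]
  · have hs : L / 2 - 5 * δ ∈ Icc 0 L := ⟨by linarith, by linarith [hS.1]⟩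
    have hs' : L - (L / 2 - 5 * δ) ∈ Icc 0 L := ⟨by linarith [hS.1], by linarith⟩
    have h1 := hg.dist_apply_sub_le hS hiso hγ hs.1 (by linarith [hS.1])
    rw [← hL] at h1
    have h2 := hγ.2.2 _ hmid _ hs'
    have h3 := hγ.2.2 _ hs _ hmid
    rw [← hiso (g ^ j)] at h3
    rw [show L / 2 - (L - (L / 2 - 5 * δ)) = -(5 * δ) by ring, abs_neg,
      abs_of_pos (by linarith [hS.1])] at h2
    rw [show L / 2 - 5 * δ - L / 2 = -(5 * δ) by ring, abs_neg,
      abs_of_pos (by linarith [hS.1])] at h3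
    linarith [dist_triangle4 (γ (L / 2)) (γ (L - (L / 2 - 5 * δ))) (g ^ j • γ (L / 2 - 5 * δ))
      (g ^ j • γ (L / 2)), hS.1]

theorem abs_sub_two_mul_le (hg : OrbitsBacktrack S g δ) (hS : DeltaHyperbolic S δ)
    (hiso : IsIsometricAction G S) (hγ : IsGeodesicParam γ y (g ^ j • y)) {s : ℝ}
    (hs : s ∈ Icc 0 (dist y (g ^ j • y))) {B : ℝ} (hB : dist (γ s) (g ^ j • γ s) ≤ B) :
    |dist y (g ^ j • y) - 2 * s| ≤ B + 8 * δ := by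
  set L := dist y (g ^ j • y) with hL
  have hs' : L - s ∈ Icc 0 L := ⟨by linarith [hs.2], by linarith [hs.1]⟩
  have hrefl : dist (γ s) (γ (L - s)) = |L - 2 * s| := by
    rw [hγ.2.2 s hs _ hs', abs_sub_comm]
    ring_nf
  rcases lt_or_ge (s + 4 * δ) (L / 2) with h1 | h1
  · have := hg.dist_apply_sub_le hS hiso hγ hs.1 h1
    rw [← hL] at this
    linarith [dist_triangle (γ s) (g ^ j • γ s) (γ (L - s)), dist_comm (g ^ j • γ s) (γ (L - s)),
      hS.1]
  rcases lt_or_ge (L - s + 4 * δ) (L / 2) with h2 | h2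
  · have := hg.dist_apply_sub_le hS hiso hγ hs'.1 h2
    rw [← hL, sub_sub_cancel] at this
    have htri := dist_triangle (g ^ j • γ (L - s)) (γ s) (g ^ j • γ s)
    rw [hiso] at htri
    linarith [dist_comm (γ s) (γ (L - s)), dist_comm (γ s) (g ^ j • γ (L - s)), hS.1]
  · rw [abs_le]
    constructor <;> linarith [dist_nonneg.trans hB]

/-- `g^k` moves `[x, g^m x]` to a geodesic with endpoints close to its own, so it moves the midpoint
`z` near a point `w` of `[x, g^m x]`; as `g^m` almost fixes `g^k z`, it almost fixes `w`, which
therefore lies near the midpoint. -/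
theorem dist_pow_smul_midpoint_le (hg : OrbitsBacktrack S g δ) (hS : DeltaHyperbolic S δ)
    (hiso : IsIsometricAction G S) {x : S} {m k : ℕ} (hγ : IsGeodesicParam γ x (g ^ m • x))
    (hk : 4 * dist x (g ^ k • x) + 4 * δ < dist x (g ^ m • x)) :
    dist (γ (dist x (g ^ m • x) / 2)) (g ^ k • γ (dist x (g ^ m • x) / 2)) ≤ 18 * δ := by
  set D := dist x (g ^ m • x) with hD
  set z := γ (D / 2)
  have hmid : D / 2 ∈ Icc 0 D := ⟨by positivity, half_le_self dist_nonneg⟩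
  have hcomm : ∀ a : S, g ^ k • g ^ m • a = g ^ m • g ^ k • a := fun a => by
    rw [← mul_smul, ← mul_smul, pow_mul_comm]
  have hp : g ^ k • z ∈ geodSide (fun t => g ^ k • γ t) (g ^ k • x) (g ^ k • g ^ m • x) :=
    apply_mem_geodSide (by rwa [hiso])
  have hxz : dist x z = D / 2 := hγ.dist_left_apply hmid
  have hzb : dist z (g ^ m • x) = D - D / 2 := hγ.dist_apply_right hmid
  have hdk : dist (g ^ m • x) (g ^ k • g ^ m • x) = dist x (g ^ k • x) := by rw [hcomm, hiso]
  obtain ⟨_, ⟨s, hs, rfl⟩, hpw⟩ := hS.exists_mem_geodSide_dist_le_of_dist_le hγ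
    (hγ.smul hiso (g ^ k)) hp
    (by linarith [dist_triangle (g ^ k • z) x (g ^ k • x), hiso (g ^ k) z x, dist_comm z x])
    (by linarith [dist_triangle (g ^ k • z) (g ^ m • x) (g ^ k • g ^ m • x),
      hiso (g ^ k) z (g ^ m • x)])
  have hmove : dist (γ s) (g ^ m • γ s) ≤ 24 * δ := by
    have hpm : dist (g ^ k • z) (g ^ m • g ^ k • z) = dist z (g ^ m • z) := by rw [← hcomm, hiso]
    linarith [hg.dist_smul_midpoint_le hS hiso hγ,
      dist_triangle4 (γ s) (g ^ k • z) (g ^ m • g ^ k • z) (g ^ m • γ s),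
      hiso (g ^ m) (g ^ k • z) (γ s), dist_comm (γ s) (g ^ k • z)]
  have hflip := abs_le.1 (hg.abs_sub_two_mul_le hS hiso hγ hs hmove)
  have hzw : dist z (γ s) = |D / 2 - s| := hγ.2.2 _ hmid _ hs
  have : |D / 2 - s| ≤ 16 * δ := abs_le.2 ⟨by linarith, by linarith⟩
  linarith [dist_triangle z (γ s) (g ^ k • z), dist_comm (γ s) (g ^ k • z)]

theorem isBounded_orbit (hg : OrbitsBacktrack S g δ) (hS : DeltaHyperbolic S δ)
    (hiso : IsIsometricAction G S) (hacyl : AcylindricalAction G S) (x : S) :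
    IsBounded (range fun n : ℤ => g ^ n • x) := by
  by_contra hx
  obtain ⟨R, N, hR0, -, hN⟩ := hacyl (18 * δ) (by linarith [hS.1])
  obtain ⟨M, hM⟩ := ((finite_Iic N).image fun k => dist x (g ^ k • x)).bddAbove
  obtain ⟨m, hm⟩ := exists_lt_dist_pow_smul hiso hx (4 * M + 4 * δ)
  obtain ⟨m', hm'⟩ := exists_lt_dist_pow_smul hiso hx (dist x (g ^ m • x) + 2 * R)
  obtain ⟨γ, hγ⟩ := hS.2.1 x (g ^ m • x)
  obtain ⟨γ', hγ'⟩ := hS.2.1 x (g ^ m' • x)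
  set z := γ (dist x (g ^ m • x) / 2)
  set z' := γ' (dist x (g ^ m' • x) / 2)
  have hz : dist x z = dist x (g ^ m • x) / 2 :=
    hγ.dist_left_apply ⟨by positivity, half_le_self dist_nonneg⟩
  have hz' : dist x z' = dist x (g ^ m' • x) / 2 :=
    hγ'.dist_left_apply ⟨by positivity, half_le_self dist_nonneg⟩
  have hR : R ≤ dist z z' := by linarith [dist_triangle x z z']
  have hsub : (fun k : ℕ => g ^ k) '' Iic N ⊆
      {a : G | dist z (a • z) ≤ 18 * δ ∧ dist z' (a • z') ≤ 18 * δ} := by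
    rintro _ ⟨k, hk, rfl⟩
    have := hM (mem_image_of_mem _ hk)
    exact ⟨hg.dist_pow_smul_midpoint_le hS hiso hγ (by linarith),
      hg.dist_pow_smul_midpoint_le hS hiso hγ' (by linarith)⟩
  have hcard := (encard_le_encard hsub).trans (hN _ _ hR)
  rw [(injective_pow_of_not_isBounded hx).injOn.encard_image, ← Finset.coe_Iic,
    encard_coe_eq_coe_finsetCard, Nat.card_Iic] at hcard
  exact absurd (Nat.cast_le.1 hcard) (by omega)

end OrbitsBacktrack

end HyperbolicActions

/-- Let `G` be a group acting acylindrically by isometries on a hyperbolic geodesic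
metric space `S`. Then every element of `G` is either elliptic or loxodromic. -/
theorem statement_1 {G : Type*} [Group G] {S : Type*} [MetricSpace S] [MulAction G S]
    (hiso : IsIsometricAction G S) (hhyp : HyperbolicSpace S)
    (hacyl : AcylindricalAction G S) (g : G) :
    IsElliptic S g ∨ IsLoxodromic S g := by
  obtain ⟨δ, hS⟩ := hhyp.exists_deltaHyperbolic
  by_cases hg : OrbitsBacktrack S g δ
  · exact Or.inl (hg.isBounded_orbit hS hiso hacyl)
  · exact Or.inr (isLoxodromic_of_not_orbitsBacktrack hS hiso hg)
end

section
/- Every acylindrically hyperbolic group G contains a finite normal subgroup K(G) that contains every finite normal subgroup of G; in particular, K(G) is the unique maximal finite normal subgroup of G. -/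
/-!
Fix a basepoint `s` and a `δ`-hyperbolic space. For a finite normal subgroup `N`, the orbit
`N • s` is a finite set, and its almost-centres (points almost minimising the radius of a ball
containing it) form a set of diameter at most `4δ + 2`: the midpoint of two far-apart
almost-centres would be a strictly better centre, by thinness of the triangles they span with
each orbit point. `N` permutes the orbit, hence its almost-centres, so it moves some point `x`
by at most `4δ + 2`; by normality it moves every point `g • x` by as little. Choosing `g` with
`g • x` far from `x` (the orbits are unbounded), acylindricity bounds `|N|` uniformly in `N`.
A finite normal subgroup of maximal order then contains all others, since the product of two
finite normal subgroups is again one.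
-/

open Metric

section Geodesics

variable {S : Type*} [MetricSpace S]

lemma IsGeodesicParam.dist_left_apply_s5 {γ : ℝ → S} {x y : S} (hγ : IsGeodesicParam γ x y)
    {t : ℝ} (ht : t ∈ Set.Icc 0 (dist x y)) : dist x (γ t) = t := by
  obtain ⟨h0, -, hiso⟩ := hγ
  rw [← h0, hiso 0 ⟨le_rfl, dist_nonneg⟩ t ht, zero_sub, abs_neg, abs_of_nonneg ht.1]

lemma IsGeodesicParam.dist_apply_right_s5 {γ : ℝ → S} {x y : S} (hγ : IsGeodesicParam γ x y)
    {t : ℝ} (ht : t ∈ Set.Icc 0 (dist x y)) : dist (γ t) y = dist x y - t := by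
  obtain ⟨-, hd, hiso⟩ := hγ
  conv_lhs => rw [← hd]
  rw [hiso t ht _ ⟨dist_nonneg, le_rfl⟩, abs_sub_comm, abs_of_nonneg (sub_nonneg.2 ht.2)]

lemma dist_add_dist_le_of_dist_geodSide_le {γ : ℝ → S} {x y m p : S} {δ : ℝ}
    (hγ : IsGeodesicParam γ x y) (hp : p ∈ geodSide γ x y) (hmp : dist m p ≤ δ) :
    dist x m + dist m y ≤ dist x y + 2 * δ := by
  obtain ⟨t, ht, rfl⟩ := hp
  have hxm := dist_triangle x (γ t) m
  have hmy := dist_triangle m (γ t) y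
  rw [hγ.dist_left_apply_s5 ht, dist_comm (γ t) m] at hxm
  rw [hγ.dist_apply_right_s5 ht] at hmy
  linarith

end Geodesics

def ThinTriangles (S : Type*) [MetricSpace S] (δ : ℝ) : Prop :=
  ∀ (x y z : S) (γ₁ γ₂ γ₃ : ℝ → S),
    IsGeodesicParam γ₁ x y → IsGeodesicParam γ₂ y z → IsGeodesicParam γ₃ x z →
      SideThin δ (geodSide γ₁ x y) (geodSide γ₂ y z) (geodSide γ₃ x z)

lemma HyperbolicSpace.exists_thinTriangles {S : Type*} [MetricSpace S]
    (hS : HyperbolicSpace S) : ∃ δ, 0 ≤ δ ∧ ThinTriangles S δ := by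
  obtain ⟨-, δ, hδ, hthin⟩ := hS
  exact ⟨δ, hδ, fun x y z γ₁ γ₂ γ₃ h₁ h₂ h₃ => (hthin x y z γ₁ γ₂ γ₃ h₁ h₂ h₃).1⟩

section AlmostCentres

variable {S : Type*} [MetricSpace S]

lemma exists_almost_centre {Y : Set S} (hY : Bornology.IsBounded Y) (hne : Y.Nonempty)
    {ε : ℝ} (hε : 0 < ε) :
    ∃ r x, Y ⊆ closedBall x (r + ε) ∧ ∀ m t, Y ⊆ closedBall m t → r ≤ t := by
  set A : Set ℝ := {t | ∃ m, Y ⊆ closedBall m t}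
  obtain ⟨y, hy⟩ := hne
  have hAne : A.Nonempty := by
    obtain ⟨ρ, hρ⟩ := hY.subset_closedBall y
    exact ⟨ρ, y, hρ⟩
  have hAbdd : BddBelow A :=
    ⟨0, fun t ⟨m, hm⟩ => dist_nonneg.trans (mem_closedBall.1 (hm hy))⟩
  obtain ⟨t, ⟨x, hx⟩, hlt⟩ := exists_lt_of_csInf_lt hAne (lt_add_of_pos_right (sInf A) hε)
  exact ⟨sInf A, x, hx.trans (closedBall_subset_closedBall hlt.le),
    fun m t hm => csInf_le hAbdd ⟨m, hm⟩⟩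

/-- The midpoint `m` of `[x, x']` is within `r + ε + 2δ - dist x x' / 2` of each point of `Y`,
so the minimality of `r` bounds `dist x x'`. -/
lemma ThinTriangles.dist_le_of_almost_centres {δ : ℝ} (hgeo : GeodesicSpace S)
    (hthin : ThinTriangles S δ) {Y : Set S} {r ε : ℝ}
    (hr : ∀ m t, Y ⊆ closedBall m t → r ≤ t) {x x' : S}
    (hx : Y ⊆ closedBall x (r + ε)) (hx' : Y ⊆ closedBall x' (r + ε)) :
    dist x x' ≤ 4 * δ + 2 * ε := by
  set d := dist x x'
  obtain ⟨γ, hγ⟩ := hgeo x x'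
  have hmid : d / 2 ∈ Set.Icc 0 d := ⟨by positivity, by linarith [dist_nonneg (x := x) (y := x')]⟩
  set m := γ (d / 2)
  have hxm : dist x m = d / 2 := hγ.dist_left_apply_s5 hmid
  have hmx' : dist m x' = d / 2 := by rw [hγ.dist_apply_right_s5 hmid]; ring
  have hm : Y ⊆ closedBall m (r + ε + 2 * δ - d / 2) := by
    intro y hy
    obtain ⟨γ₂, hγ₂⟩ := hgeo x' y
    obtain ⟨γ₃, hγ₃⟩ := hgeo x y
    have hxy := mem_closedBall'.1 (hx hy)
    have hx'y := mem_closedBall'.1 (hx' hy)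
    rw [mem_closedBall']
    obtain ⟨p, hp | hp, hmp⟩ := hthin x x' y γ γ₂ γ₃ hγ hγ₂ hγ₃ m ⟨d / 2, hmid, rfl⟩
    · linarith [dist_add_dist_le_of_dist_geodSide_le hγ₂ hp hmp, dist_comm x' m]
    · linarith [dist_add_dist_le_of_dist_geodSide_le hγ₃ hp hmp]
  linarith [hr m _ hm]

end AlmostCentres

section Action

variable {G : Type*} [Group G] {S : Type*} [MetricSpace S] [MulAction G S]

lemma IsIsometricAction.isIsometricSMul (h : IsIsometricAction G S) : IsIsometricSMul G S :=
  ⟨fun g => Isometry.of_dist_eq (h g)⟩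

variable [IsIsometricSMul G S]

lemma exists_dist_smul_le_of_isBounded_orbit {δ : ℝ} (hgeo : GeodesicSpace S)
    (hthin : ThinTriangles S δ) (H : Subgroup G) {s : S}
    (hb : Bornology.IsBounded ((fun a : G => a • s) '' (H : Set G))) :
    ∃ x : S, ∀ a ∈ H, dist x (a • x) ≤ 4 * δ + 2 := by
  obtain ⟨r, x, hx, hr⟩ := exists_almost_centre hb ⟨s, 1, H.one_mem, one_smul G s⟩ one_pos
  refine ⟨x, fun a ha => ?_⟩
  have hax : (fun a : G => a • s) '' (H : Set G) ⊆ closedBall (a • x) (r + 1) := by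
    rintro - ⟨b, hb, rfl⟩
    rw [mem_closedBall', ← dist_smul a⁻¹, inv_smul_smul, ← mul_smul]
    exact mem_closedBall'.1 (hx ⟨_, H.mul_mem (H.inv_mem ha) hb, rfl⟩)
  simpa using hthin.dist_le_of_almost_centres hgeo hr hx hax

lemma Subgroup.Normal.dist_smul_smul_le {N : Subgroup G} (hN : N.Normal) {x : S} {C : ℝ}
    (hx : ∀ a ∈ N, dist x (a • x) ≤ C) (g : G) {a : G} (ha : a ∈ N) :
    dist (g • x) (a • g • x) ≤ C := by
  have hconj : g⁻¹ * a * g ∈ N := by simpa using hN.conj_mem a ha g⁻¹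
  calc dist (g • x) (a • g • x) = dist x ((g⁻¹ * a * g) • x) := by
        rw [← dist_smul g⁻¹, inv_smul_smul, mul_assoc, mul_smul, mul_smul]
    _ ≤ C := hx _ hconj

lemma UnboundedOrbits.exists_le_dist_smul (h : UnboundedOrbits G S) (x : S) (R : ℝ) :
    ∃ g : G, R ≤ dist x (g • x) := by
  obtain ⟨s, hs⟩ := h
  by_contra! hR
  refine hs ((isBounded_closedBall (x := x) (r := dist s x + R)).subset ?_)
  rintro - ⟨g, rfl⟩
  rw [mem_closedBall]
  calc dist (g • s) x ≤ dist (g • s) (g • x) + dist (g • x) x := dist_triangle _ _ _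
    _ ≤ dist s x + R := by rw [dist_smul, dist_comm (g • x)]; linarith [hR g]

/-- A normal subgroup moving some point `x` by at most `ε` moves all of `G • x` by at most `ε`,
and `G • x` contains points arbitrarily far from `x`. -/
lemma AcylindricalAction.exists_encard_le (hacyl : AcylindricalAction G S)
    (hunb : UnboundedOrbits G S) {ε : ℝ} (hε : 0 < ε) :
    ∃ n : ℕ, ∀ N : Subgroup G, N.Normal → ∀ x : S, (∀ a ∈ N, dist x (a • x) ≤ ε) →
      (N : Set G).encard ≤ n := by
  obtain ⟨R, n, -, -, hRn⟩ := hacyl ε hε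
  refine ⟨n, fun N hN x hx => ?_⟩
  obtain ⟨g, hg⟩ := hunb.exists_le_dist_smul x R
  refine (Set.encard_mono fun a ha => ?_).trans (hRn x (g • x) hg)
  exact ⟨hx a ha, hN.dist_smul_smul_le hx g ha⟩

end Action

lemma Subgroup.finite_sup {G : Type*} [Group G] {H N : Subgroup G} [N.Normal]
    (hH : (H : Set G).Finite) (hN : (N : Set G).Finite) : ((H ⊔ N : Subgroup G) : Set G).Finite := by
  rw [Subgroup.mul_normal]
  exact hH.mul hN

lemma Subgroup.existsUnique_finite_normal_le_of_ncard_le {G : Type*} [Group G] (n : ℕ)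
    (hn : ∀ N : Subgroup G, N.Normal → (N : Set G).Finite → (N : Set G).ncard ≤ n) :
    ∃! K : Subgroup G, K.Normal ∧ (K : Set G).Finite ∧
      ∀ N : Subgroup G, N.Normal → (N : Set G).Finite → N ≤ K := by
  set F := {K : Subgroup G | K.Normal ∧ (K : Set G).Finite}
  have hcard : ((fun K : Subgroup G => (K : Set G).ncard) '' F).Finite :=
    (Set.finite_le_nat n).subset (by rintro - ⟨K, hK, rfl⟩; exact hn K hK.1 hK.2)
  have hbot : (⊥ : Subgroup G) ∈ F := ⟨inferInstance, by simp⟩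
  obtain ⟨K, ⟨hKn, hKf⟩, hKmax⟩ := Set.Finite.exists_maximalFor' _ F hcard ⟨⊥, hbot⟩
  have hle : ∀ N : Subgroup G, N.Normal → (N : Set G).Finite → N ≤ K := by
    intro N hNn hNf
    have hsup : N ⊔ K ∈ F := ⟨Subgroup.sup_normal N K, Subgroup.finite_sup hNf hKf⟩
    have hsub : (K : Set G) ⊆ (N ⊔ K : Subgroup G) := SetLike.coe_subset_coe.2 le_sup_right
    have heq := Set.eq_of_subset_of_ncard_le hsub
      (hKmax hsup (Set.ncard_le_ncard hsub hsup.2)) hsup.2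
    exact le_sup_left.trans (SetLike.coe_injective heq.symm).le
  exact ⟨K, ⟨hKn, hKf, hle⟩, fun K' ⟨hK'n, hK'f, hK'le⟩ =>
    le_antisymm (hle K' hK'n hK'f) (hK'le K hKn hKf)⟩

/-- Every acylindrically hyperbolic group `G` contains a finite normal subgroup `K`
containing every finite normal subgroup of `G`; in particular, `K` is the unique
maximal finite normal subgroup of `G`. -/
theorem statement_5 {G : Type*} [Group G] (h : AcylindricallyHyperbolic G) :
    ∃! K : Subgroup G, K.Normal ∧ (K : Set G).Finite ∧
      ∀ N : Subgroup G, N.Normal → (N : Set G).Finite → N ≤ K := by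
  obtain ⟨-, S, _, _, hiso, hhyp, hacyl, hunb⟩ := h
  have := hiso.isIsometricSMul
  obtain ⟨δ, hδ, hthin⟩ := hhyp.exists_thinTriangles
  obtain ⟨n, hn⟩ := hacyl.exists_encard_le hunb (ε := 4 * δ + 2) (by positivity)
  obtain ⟨s, -⟩ := hunb
  refine Subgroup.existsUnique_finite_normal_le_of_ncard_le n fun N hN hNf => ?_
  obtain ⟨x, hx⟩ := exists_dist_smul_le_of_isBounded_orbit hhyp.1 hthin N
    (hNf.image fun a : G => a • s).isBounded
  exact (Set.encard_le_coe_iff_finite_ncard_le.1 (hn N hN x hx)).2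
end

section
/- Let G be a group, H a subgroup of G, and X ⊆ G such that H is hyperbolically embedded in G with respect to X. Then H is almost malnormal in G: for every g ∈ G \ H, the intersection g⁻¹Hg ∩ H is finite. -/
namespace RelCayley

variable {G : Type*} [Group G] (X : Set G) (H : Subgroup G)

/-- A directed edge-letter of the Cayley graph `Γ(G, X ⊔ H)`: a letter of the disjoint
alphabet `X ⊔ H` together with a direction of traversal (`true` = positively). -/
def Letter : Type _ := (↥X ⊕ ↥H) × Bool

/-- The element of `G` by which a traversed letter multiplies the current vertex. -/
def letterVal : Letter X H → G
  | (Sum.inl a, true) => (a : G)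
  | (Sum.inl a, false) => (a : G)⁻¹
  | (Sum.inr h, true) => (h : G)
  | (Sum.inr h, false) => (h : G)⁻¹

/-- The element of `G` represented by an edge-path (read as a word). -/
def pathProd (w : List (Letter X H)) : G := (w.map (letterVal X H)).prod

/-- The combinatorial distance between two vertices of `Γ(G, X ⊔ H)`:
the smallest length of an edge-path joining them. -/
noncomputable def relDist (f g : G) : ℕ :=
  sInf {n : ℕ | ∃ w : List (Letter X H), w.length = n ∧ f * pathProd X H w = g}

/-- `w` is a geodesic edge-path from `f` to `g` in `Γ(G, X ⊔ H)`. -/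
def IsGeodesicWord (f g : G) (w : List (Letter X H)) : Prop :=
  f * pathProd X H w = g ∧ w.length = relDist X H f g

/-- The list of vertices visited by the edge-path `w` starting at the vertex `f`. -/
def vertices (f : G) (w : List (Letter X H)) : List G :=
  w.scanl (fun u ℓ => u * letterVal X H ℓ) f

/-- The graph `Γ(G, X ⊔ H)` is hyperbolic: for some `δ`, each side of every geodesic
triangle lies in the `δ`-neighborhood of the union of the other two sides. -/
def GraphHyperbolic : Prop :=
  ∃ δ : ℕ, ∀ (x y z : G) (w₁ w₂ w₃ : List (Letter X H)),
    IsGeodesicWord X H x y w₁ → IsGeodesicWord X H y z w₂ → IsGeodesicWord X H x z w₃ →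
      (∀ u ∈ vertices X H x w₁, ∃ v,
        (v ∈ vertices X H y w₂ ∨ v ∈ vertices X H x w₃) ∧ relDist X H u v ≤ δ) ∧
      (∀ u ∈ vertices X H y w₂, ∃ v,
        (v ∈ vertices X H x w₁ ∨ v ∈ vertices X H x w₃) ∧ relDist X H u v ≤ δ) ∧
      (∀ u ∈ vertices X H x w₃, ∃ v,
        (v ∈ vertices X H x w₁ ∨ v ∈ vertices X H y w₂) ∧ relDist X H u v ≤ δ)

/-- An edge-path starting at the vertex `1` contains no edge of `Γ_H` (the complete
subgraph with vertex set `H` and edges labeled by letters of `H`): whenever a letter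
from `H` is traversed, the current vertex (hence also the next one) lies outside `H`. -/
def AvoidsGammaH (w : List (Letter X H)) : Prop :=
  ∀ i : Fin w.length, ((w.get i).1.isRight = true) → pathProd X H (w.take i) ∉ H

/-- `H` is hyperbolically embedded in `G` with respect to `X`: `G = ⟨X ∪ H⟩`, the
Cayley graph `Γ(G, X ⊔ H)` is hyperbolic, and for every `n` only finitely many `h ∈ H`
can be joined to `1` by a path of length at most `n` avoiding the edges of `Γ_H`. -/
def HypEmbedded : Prop :=
  Subgroup.closure (X ∪ (H : Set G)) = ⊤ ∧
  GraphHyperbolic X H ∧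
  ∀ n : ℕ, {h : ↥H | ∃ w : List (Letter X H),
      w.length ≤ n ∧ pathProd X H w = (h : G) ∧ AvoidsGammaH X H w}.Finite

end RelCayley

/-
Write `g = u · c` where `c` is read along a word `W` none of whose nonempty prefixes ends in `H`
and `u ∈ H` (cut a word for `g` at its last vertex in `H`). For `x ∈ H` with `g x g⁻¹ ∈ H`, also
`c x c⁻¹ ∈ H`, and the path `W · x · W⁻¹` from `1` to `c x c⁻¹` meets `H` only at its endpoints, so
it contains no edge of `Γ_H`. Its length `2|W| + 1` does not depend on `x`, so by the finiteness
condition in the definition of hyperbolic embedding there are only finitely many such `x`.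
-/

namespace RelCayley

variable {G : Type*} [Group G] (X : Set G) (H : Subgroup G)

def letterInv (l : Letter X H) : Letter X H := (l.1, !l.2)

def wordInv (w : List (Letter X H)) : List (Letter X H) := (w.map (letterInv X H)).reverse

lemma letterVal_letterInv (l : Letter X H) :
    letterVal X H (letterInv X H l) = (letterVal X H l)⁻¹ := by
  rcases l with ⟨a | a, b | b⟩ <;> simp [letterInv, letterVal]

lemma letterVal_mem_of_isRight {l : Letter X H} (hl : l.1.isRight = true) :
    letterVal X H l ∈ H := by
  rcases l with ⟨a | a, b | b⟩ <;> simp_all [letterVal]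

@[simp]
lemma pathProd_nil : pathProd X H [] = 1 := rfl

@[simp]
lemma pathProd_cons (l : Letter X H) (w : List (Letter X H)) :
    pathProd X H (l :: w) = letterVal X H l * pathProd X H w := by
  simp [pathProd]

@[simp]
lemma pathProd_append (w₁ w₂ : List (Letter X H)) :
    pathProd X H (w₁ ++ w₂) = pathProd X H w₁ * pathProd X H w₂ := by
  simp [pathProd]

lemma pathProd_take_mul_pathProd_drop (w : List (Letter X H)) (i : ℕ) :
    pathProd X H (w.take i) * pathProd X H (w.drop i) = pathProd X H w := by
  rw [← pathProd_append, List.take_append_drop]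

@[simp]
lemma pathProd_wordInv (w : List (Letter X H)) :
    pathProd X H (wordInv X H w) = (pathProd X H w)⁻¹ := by
  induction w with
  | nil => simp [wordInv]
  | cons l w ih =>
    simp [wordInv, letterVal_letterInv, ← ih]

lemma pathProd_take_wordInv (w : List (Letter X H)) (k : ℕ) :
    pathProd X H ((wordInv X H w).take k)
      = (pathProd X H w)⁻¹ * pathProd X H (w.take (w.length - k)) := by
  rw [wordInv, List.take_reverse, List.length_map, ← List.map_drop, ← wordInv, pathProd_wordInv,
    ← pathProd_take_mul_pathProd_drop X H w (w.length - k)]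
  group

lemma exists_pathProd_eq (hcl : Subgroup.closure (X ∪ (H : Set G)) = ⊤) (g : G) :
    ∃ w : List (Letter X H), pathProd X H w = g := by
  have hg : g ∈ Subgroup.closure (X ∪ (H : Set G)) := hcl ▸ Subgroup.mem_top g
  induction hg using Subgroup.closure_induction with
  | mem s hs =>
    rcases hs with hs | hs
    · exact ⟨[(Sum.inl ⟨s, hs⟩, true)], mul_one s⟩
    · exact ⟨[(Sum.inr ⟨s, hs⟩, true)], mul_one s⟩
  | one => exact ⟨[], rfl⟩
  | mul a b _ _ ha hb =>
    obtain ⟨w₁, rfl⟩ := ha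
    obtain ⟨w₂, rfl⟩ := hb
    exact ⟨w₁ ++ w₂, pathProd_append X H w₁ w₂⟩
  | inv a _ ha =>
    obtain ⟨w, rfl⟩ := ha
    exact ⟨wordInv X H w, pathProd_wordInv X H w⟩

/-- Quantifying over all `j > 0`, not only `j ≤ w.length`, also forces `w ≠ []` and
`pathProd w ∉ H`. -/
def PrefixesOutside (w : List (Letter X H)) : Prop :=
  ∀ j, 0 < j → pathProd X H (w.take j) ∉ H

lemma exists_take_mem_prefixesOutside_drop {w : List (Letter X H)} (hw : pathProd X H w ∉ H) :
    ∃ i, pathProd X H (w.take i) ∈ H ∧ PrefixesOutside X H (w.drop i) := by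
  classical
  let P : ℕ → Prop := fun i => pathProd X H (w.take i) ∈ H
  have hP0 : P 0 := by simp [P, one_mem]
  refine ⟨Nat.findGreatest P w.length, Nat.findGreatest_spec (Nat.zero_le _) hP0, ?_⟩
  intro j hj hmem
  have hlast : P (Nat.findGreatest P w.length + j) := by
    simp only [P, List.take_add, pathProd_append]
    exact mul_mem (Nat.findGreatest_spec (Nat.zero_le _) hP0) hmem
  by_cases hle : Nat.findGreatest P w.length + j ≤ w.length
  · exact Nat.findGreatest_is_greatest (by omega) hle hlast
  · exact hw (by simpa [P, List.take_of_length_le (Nat.le_of_not_le hle)] using hlast)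

/-- An `H`-edge leaving a vertex in `H` ends in `H`, so a path whose interior vertices all lie
outside `H` can only use an `H`-edge at an endpoint; length `≥ 2` rules out the first edge. -/
lemma avoidsGammaH_of_interior_not_mem {w : List (Letter X H)} (hlen : 2 ≤ w.length)
    (hint : ∀ i, 0 < i → i < w.length → pathProd X H (w.take i) ∉ H) :
    AvoidsGammaH X H w := by
  rintro ⟨_ | i, hi⟩ hl
  · obtain ⟨l, w, rfl⟩ := List.exists_cons_of_length_pos (by omega : 0 < w.length)
    intro _
    exact hint 1 one_pos hlen (by simpa using letterVal_mem_of_isRight X H hl)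
  · exact hint (i + 1) i.succ_pos hi

def hLetter (h : H) : Letter X H := (Sum.inr h, true)

@[simp]
lemma letterVal_hLetter (h : H) : letterVal X H (hLetter X H h) = h := rfl

def conjWord (w : List (Letter X H)) (h : H) : List (Letter X H) :=
  w ++ hLetter X H h :: wordInv X H w

lemma length_conjWord (w : List (Letter X H)) (h : H) :
    (conjWord X H w h).length = 2 * w.length + 1 := by
  simp only [conjWord, wordInv, List.length_append, List.length_cons, List.length_reverse,
    List.length_map]
  omega

lemma pathProd_conjWord (w : List (Letter X H)) (h : H) :
    pathProd X H (conjWord X H w h) = pathProd X H w * h * (pathProd X H w)⁻¹ := by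
  simp [conjWord, mul_assoc]

lemma avoidsGammaH_conjWord {w : List (Letter X H)} (hw : PrefixesOutside X H w) {h : H}
    (hconj : pathProd X H w * h * (pathProd X H w)⁻¹ ∈ H) :
    AvoidsGammaH X H (conjWord X H w h) := by
  have hpos : 0 < w.length := by
    by_contra! h0
    exact hw 1 one_pos (by simp [List.eq_nil_of_length_eq_zero (Nat.le_zero.mp h0), one_mem])
  refine avoidsGammaH_of_interior_not_mem X H (by rw [length_conjWord]; omega) fun i hi hlt => ?_
  rw [length_conjWord] at hlt
  rcases Nat.lt_or_ge w.length i with hgt | hle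
  · obtain ⟨k, rfl⟩ := Nat.exists_eq_add_of_lt hgt
    rw [conjWord, Nat.add_assoc, List.take_length_add_append, List.take_succ_cons, pathProd_append,
      pathProd_cons, letterVal_hLetter, pathProd_take_wordInv]
    intro hmem
    refine hw (w.length - k) (by omega) ?_
    rwa [← mul_assoc, ← mul_assoc, Subgroup.mul_mem_cancel_left H hconj] at hmem
  · rw [conjWord, List.take_append_of_le_length hle]
    exact hw i hi

lemma finite_conj_inter_of_prefixesOutside (hhe : HypEmbedded X H) {w : List (Letter X H)}
    (hw : PrefixesOutside X H w) :
    {x : G | x ∈ H ∧ pathProd X H w * x * (pathProd X H w)⁻¹ ∈ H}.Finite := by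
  set c := pathProd X H w
  refine ((hhe.2.2 (2 * w.length + 1)).image fun y : H => c⁻¹ * y * c).subset ?_
  rintro x ⟨hx, hcx⟩
  refine ⟨⟨c * x * c⁻¹, hcx⟩, ⟨conjWord X H w ⟨x, hx⟩, (length_conjWord X H w _).le,
    pathProd_conjWord X H w _, avoidsGammaH_conjWord X H hw hcx⟩, by group⟩

lemma mul_conj_mem_iff {u : G} (hu : u ∈ H) (c x : G) :
    u * c * x * (u * c)⁻¹ ∈ H ↔ c * x * c⁻¹ ∈ H := by
  have : u * c * x * (u * c)⁻¹ = u * (c * x * c⁻¹) * u⁻¹ := by group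
  rw [this, Subgroup.mul_mem_cancel_right H (inv_mem hu), Subgroup.mul_mem_cancel_left H hu]

end RelCayley

/-- If `H` is hyperbolically embedded in `G` with respect to `X`, then `H` is almost
malnormal: for every `g ∉ H`, the intersection `g⁻¹Hg ∩ H` is finite. -/
theorem statement_18 {G : Type*} [Group G] (H : Subgroup G) (X : Set G)
    (hhe : RelCayley.HypEmbedded X H) :
    ∀ g : G, g ∉ H → {x : G | x ∈ H ∧ g * x * g⁻¹ ∈ H}.Finite := by
  intro g hg
  obtain ⟨w, rfl⟩ := RelCayley.exists_pathProd_eq X H hhe.1 g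
  obtain ⟨i, hu, hW⟩ := RelCayley.exists_take_mem_prefixesOutside_drop X H hg
  rw [← RelCayley.pathProd_take_mul_pathProd_drop X H w i]
  simp_rw [RelCayley.mul_conj_mem_iff H hu]
  exact RelCayley.finite_conj_inter_of_prefixesOutside X H hhe hW
end
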